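/- For all integers k ≥ 2 and n ≥ 2, the number of tuples (α_1, …, α_n) of integers satisfying 0 ≤ α_i ≤ k−1 for every 2 ≤ i ≤ n and 0 ≤ α_1 ≤ (α_2 + ⋯ + α_n) − 2 is equal to (2 + k^{n−1}·((n−1)(k−1) − 2))/2; that is, the cardinality of I_{k,n} equals the genus g_{k,n} of a generalized Fermat curve of type (k,n). -/

import Mathlib

open Finset

/-- Sum over a constant piFinset on `Fin (m+1)` splits off the first coordinate. -/
lemma sum_piFinset_succ {M : Type*} [AddCommMonoid M] (k m : ℕ)
    (f : (Fin (m + 1) → ℕ) → M) :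
    ∑ β ∈ Fintype.piFinset (fun _ : Fin (m + 1) => Finset.range k), f β =
      ∑ a ∈ Finset.range k, ∑ β ∈ Fintype.piFinset (fun _ : Fin m => Finset.range k),
        f (Fin.cons a β) := by
  rw [← Finset.sum_product']
  refine Finset.sum_bij' (i := fun β _ => (β 0, Fin.tail β))
    (j := fun p _ => Fin.cons p.1 p.2) ?_ ?_ ?_ ?_ ?_
  · intro β hβ
    simp only [Fintype.mem_piFinset, Finset.mem_range] at hβ
    simp only [Finset.mem_product, Finset.mem_range, Fintype.mem_piFinset]
    exact ⟨hβ 0, fun i => hβ i.succ⟩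
  · intro p hp
    simp only [Finset.mem_product, Finset.mem_range, Fintype.mem_piFinset] at hp
    simp only [Fintype.mem_piFinset, Finset.mem_range]
    intro i
    refine Fin.cases ?_ ?_ i
    · simpa using hp.1
    · intro j; simpa using hp.2 j
  · intro β _
    exact Fin.cons_self_tail β
  · intro p _
    simp [Fin.tail_cons]
  · intro β _
    simp [Fin.cons_self_tail]

/-- First moment: twice the sum of coordinate-sums over all tuples. -/
lemma sum_sum_piFinset (k : ℕ) (hk : 1 ≤ k) : ∀ m : ℕ,
    2 * ((∑ β ∈ Fintype.piFinset (fun _ : Fin m => Finset.range k), ∑ i, β i : ℕ) : ℤ) =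
      (m : ℤ) * (k : ℤ) ^ m * ((k : ℤ) - 1)
  | 0 => by simp
  | (m + 1) => by
    have ih := sum_sum_piFinset k hk m
    rw [sum_piFinset_succ]
    have hgauss : ((∑ i ∈ Finset.range k, i : ℕ) : ℤ) * 2 = (k : ℤ) * ((k : ℤ) - 1) := by
      have h := Finset.sum_range_id_mul_two k
      zify [hk] at h
      push_cast
      linarith
    have hsplit : ∀ a ∈ Finset.range k,
        (∑ β ∈ Fintype.piFinset (fun _ : Fin m => Finset.range k),
            ∑ i : Fin (m + 1), (Fin.cons a β : Fin (m + 1) → ℕ) i)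
          = k ^ m * a + ∑ β ∈ Fintype.piFinset (fun _ : Fin m => Finset.range k), ∑ i, β i := by
      intro a _
      rw [Finset.sum_congr rfl (fun β _ => Fin.sum_univ_succ _), Finset.sum_add_distrib]
      simp [Fintype.card_piFinset, mul_comm]
    rw [Finset.sum_congr rfl hsplit, Finset.sum_add_distrib, Finset.sum_const,
      Finset.card_range, ← Finset.mul_sum, smul_eq_mul]
    push_cast
    push_cast at ih hgauss
    ring_nf
    ring_nf at ih hgauss
    linear_combination (k : ℤ) ^ m * hgauss + (k : ℤ) * ih

/-- Key count: twice the sum of `(∑ᵢ βᵢ) - 1` (truncated) over all tuples. -/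
lemma key_sum_piFinset (k : ℕ) (hk : 2 ≤ k) (m : ℕ) :
    2 * ((∑ β ∈ Fintype.piFinset (fun _ : Fin m => Finset.range k),
        ((∑ i, β i) - 1) : ℕ) : ℤ) =
      (k : ℤ) ^ m * ((m : ℤ) * ((k : ℤ) - 1) - 2) + 2 := by
  obtain ⟨K, rfl⟩ : ∃ K, k = K + 1 := ⟨k - 1, by omega⟩
  induction m with
  | zero => simp
  | succ m ih =>
    have hT := sum_sum_piFinset (K + 1) (Nat.le_add_left 1 K) m
    rw [sum_piFinset_succ]
    have hcons : ∀ (a : ℕ) (β : Fin m → ℕ),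
        (∑ i : Fin (m + 1), (Fin.cons a β : Fin (m + 1) → ℕ) i) = a + ∑ i, β i := by
      intro a β; rw [Fin.sum_univ_succ]; simp
    simp only [hcons]
    rw [Finset.sum_range_succ']
    have hsub : ∀ j S : ℕ, j + 1 + S - 1 = j + S := fun j S => by
      rw [Nat.add_right_comm, Nat.add_sub_cancel]
    simp only [hsub, Finset.sum_add_distrib, Finset.sum_const, Fintype.card_piFinset,
      Finset.prod_const, Finset.card_range, Finset.card_univ, Fintype.card_fin, smul_eq_mul,
      zero_add]
    rw [← Finset.mul_sum]
    have hgauss : ((∑ i ∈ Finset.range K, i : ℕ) : ℤ) * 2 = (K : ℤ) * ((K : ℤ) - 1) := by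
      rcases Nat.eq_zero_or_pos K with h0 | h1
      · subst h0; simp
      · have h := Finset.sum_range_id_mul_two K
        zify [h1] at h
        push_cast
        linarith
    push_cast at ih hT hgauss ⊢
    linear_combination ((K : ℤ) + 1) ^ m * hgauss + (K : ℤ) * hT + ih

/-- The number of integer tuples `(α_1, …, α_n)` with `0 ≤ α_i ≤ k − 1` for
`2 ≤ i ≤ n` and `0 ≤ α_1 ≤ (α_2 + ⋯ + α_n) − 2` equals the genus
`g_{k,n} = (2 + k^{n−1}((n−1)(k−1) − 2))/2` of a generalized Fermat curve of type
`(k,n)`; i.e. `#I_{k,n} = g_{k,n}`. -/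
theorem card_index_set_eq_genus (k n : ℕ) (hk : 2 ≤ k) (hn : 2 ≤ n) :
    (Nat.card {α : Fin n → ℕ //
        (∀ i : Fin n, i ≠ ⟨0, by omega⟩ → α i ≤ k - 1) ∧
          α ⟨0, by omega⟩ + 2 ≤ ∑ i ∈ Finset.univ.erase ⟨0, by omega⟩, α i} : ℤ) =
      (2 + (k : ℤ) ^ (n - 1) * (((n : ℤ) - 1) * ((k : ℤ) - 1) - 2)) / 2 := by
  obtain ⟨m, rfl⟩ : ∃ m, n = m + 1 := ⟨n - 1, by omega⟩
  have herase : ∀ α : Fin (m + 1) → ℕ,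
      ∑ i ∈ Finset.univ.erase (⟨0, by omega⟩ : Fin (m + 1)), α i = ∑ i : Fin m, α i.succ := by
    intro α
    have h := Finset.sum_erase_add Finset.univ α (Finset.mem_univ (0 : Fin (m + 1)))
    rw [Fin.sum_univ_succ] at h
    have h0 : (⟨0, by omega⟩ : Fin (m + 1)) = 0 := rfl
    rw [h0]
    omega
  set G : Finset (Σ _ : Fin m → ℕ, ℕ) :=
    (Fintype.piFinset (fun _ : Fin m => Finset.range k)).sigma
      (fun β => Finset.range ((∑ i, β i) - 1)) with hG
  have hmemG : ∀ x : Σ _ : Fin m → ℕ, ℕ,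
      x ∈ G ↔ (∀ i, x.1 i < k) ∧ x.2 + 2 ≤ ∑ i, x.1 i := by
    rintro ⟨β, a⟩
    simp only [hG, Finset.mem_sigma, Fintype.mem_piFinset, Finset.mem_range]
    constructor
    · rintro ⟨h1, h2⟩; exact ⟨h1, by omega⟩
    · rintro ⟨h1, h2⟩; exact ⟨h1, by omega⟩
  have hcard : Nat.card {α : Fin (m + 1) → ℕ //
      (∀ i : Fin (m + 1), i ≠ ⟨0, by omega⟩ → α i ≤ k - 1) ∧
        α ⟨0, by omega⟩ + 2 ≤ ∑ i ∈ Finset.univ.erase (⟨0, by omega⟩ : Fin (m + 1)), α i}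
      = G.card := by
    rw [← Nat.card_eq_finsetCard]
    refine Nat.card_congr ⟨fun x => ⟨⟨Fin.tail x.1, x.1 0⟩, ?_⟩,
      fun y => ⟨Fin.cons y.1.2 y.1.1, ?_⟩, ?_, ?_⟩
    · obtain ⟨α, h1, h2⟩ := x
      rw [hmemG]
      refine ⟨fun i => ?_, ?_⟩
      · have := h1 i.succ (by simp [Fin.ext_iff])
        simp only [Fin.tail]
        omega
      · rw [herase] at h2
        exact h2
    · obtain ⟨⟨β, a⟩, hy⟩ := y
      rw [hmemG] at hy
      refine ⟨fun i hi => ?_, ?_⟩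
      · rcases Fin.eq_zero_or_eq_succ i with h | ⟨j, rfl⟩
        · exact absurd h hi
        · have hb : β j < k := hy.1 j
          simp only [Fin.cons_succ]
          omega
      · rw [herase]
        simpa using hy.2
    · rintro ⟨α, hα⟩
      simp [Fin.cons_self_tail]
    · rintro ⟨⟨β, a⟩, hy⟩
      simp [Fin.tail_cons]
  rw [hcard, hG, Finset.card_sigma]
  simp only [Finset.card_range]
  have key := key_sum_piFinset k hk m
  have hm1 : ((m + 1 : ℕ) : ℤ) - 1 = (m : ℤ) := by push_cast; ring
  rw [Nat.add_sub_cancel, hm1,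
    show (2 + (k : ℤ) ^ m * ((m : ℤ) * ((k : ℤ) - 1) - 2)) =
      2 * ((∑ β ∈ Fintype.piFinset (fun _ : Fin m => Finset.range k),
        ((∑ i, β i) - 1) : ℕ) : ℤ) by linarith [key]]
  exact (Int.mul_ediv_cancel_left _ two_ne_zero).symm
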